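/- arXiv:math/0508085 — 7 statements merged into one kernel-verified Lean document; each statement's English description precedes it below -/
import Mathlib

section
/- Boas–Bellman inequality: If x, y_1, ..., y_n are vectors in an inner product space (H, ⟨·,·⟩) over the real or complex field, then ∑_{i=1}^n |⟨x, y_i⟩|² ≤ ‖x‖² [ max_{1≤i≤n} ‖y_i‖² + ( ∑_{1≤i≠j≤n} |⟨y_i, y_j⟩|² )^{1/2} ]. -/
/-!
Duality: with `z = ∑ i, conj ⟪x, y i⟫ • y i` one has `⟪x, z⟫ = ∑ i, ‖⟪x, y i⟫‖ ^ 2 =: S`, so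
Cauchy–Schwarz gives `S ^ 2 ≤ ‖x‖ ^ 2 * ‖z‖ ^ 2`, and it suffices to bound `‖∑ i, c i • y i‖ ^ 2` by
`(∑ i, ‖c i‖ ^ 2) * K` for all coefficients `c`. Expanding the square, the diagonal terms contribute
at most `max ‖y i‖ ^ 2`, and Cauchy–Schwarz over the pairs `i ≠ j` bounds the off-diagonal ones by
`(∑_{i ≠ j} ‖⟪y i, y j⟫‖ ^ 2) ^ (1/2)`.
-/

open Finset RCLike
open scoped InnerProductSpace ComplexConjugate

section

variable {ι : Type*} [Fintype ι]

theorem sum_sum_erase_mul_le_mul_sqrt [DecidableEq ι] (u : ι → ℝ) (w : ι → ι → ℝ) :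
    ∑ i, ∑ j ∈ univ.erase i, u i * u j * w i j ≤
      (∑ i, u i ^ 2) * √(∑ i, ∑ j ∈ univ.erase i, w i j ^ 2) := by
  have h_sq : ∑ i, ∑ j ∈ univ.erase i, (u i * u j) ^ 2 ≤ (∑ i, u i ^ 2) ^ 2 := by
    calc ∑ i, ∑ j ∈ univ.erase i, (u i * u j) ^ 2
        ≤ ∑ i, ∑ j, (u i * u j) ^ 2 :=
          sum_le_sum fun i _ => sum_le_sum_of_subset_of_nonneg (erase_subset _ _)
            fun _ _ _ => sq_nonneg _
      _ = (∑ i, u i ^ 2) ^ 2 := by simp_rw [sq (∑ i, _), sum_mul_sum, mul_pow]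
  simp only [sum_sigma'] at h_sq ⊢
  calc _ ≤ √(∑ p ∈ univ.sigma fun i => univ.erase i, (u p.1 * u p.2) ^ 2) *
        √(∑ p ∈ univ.sigma fun i => univ.erase i, w p.1 p.2 ^ 2) :=
        Real.sum_mul_le_sqrt_mul_sqrt _ _ _
    _ ≤ _ := by
      gcongr
      exact Real.sqrt_le_left (by positivity) |>.mpr h_sq

variable {𝕜 H : Type*} [RCLike 𝕜] [NormedAddCommGroup H] [InnerProductSpace 𝕜 H]

theorem norm_sum_smul_sq_le_sum_sum (c : ι → 𝕜) (y : ι → H) :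
    ‖∑ i, c i • y i‖ ^ 2 ≤ ∑ i, ∑ j, ‖c i‖ * ‖c j‖ * ‖⟪y i, y j⟫_𝕜‖ := by
  calc ‖∑ i, c i • y i‖ ^ 2 = ‖⟪∑ i, c i • y i, ∑ j, c j • y j⟫_𝕜‖ := by
        rw [inner_self_eq_norm_sq_to_K, norm_pow, norm_ofReal, abs_norm]
    _ ≤ ∑ i, ∑ j, ‖⟪c i • y i, c j • y j⟫_𝕜‖ := by
        rw [sum_inner]
        refine (norm_sum_le _ _).trans (sum_le_sum fun i _ => ?_)
        rw [inner_sum]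
        exact norm_sum_le _ _
    _ = _ := sum_congr rfl fun i _ => sum_congr rfl fun j _ => by
        rw [inner_smul_left, inner_smul_right, norm_mul, norm_mul, norm_conj, mul_assoc]

theorem norm_sum_smul_sq_le {M : ℝ} (y : ι → H) (hM : ∀ i, ‖y i‖ ^ 2 ≤ M) [DecidableEq ι]
    (c : ι → 𝕜) :
    ‖∑ i, c i • y i‖ ^ 2 ≤
      (∑ i, ‖c i‖ ^ 2) * (M + √(∑ i, ∑ j ∈ univ.erase i, ‖⟪y i, y j⟫_𝕜‖ ^ 2)) := by
  have h_diag : ∑ i, ‖c i‖ * ‖c i‖ * ‖⟪y i, y i⟫_𝕜‖ ≤ (∑ i, ‖c i‖ ^ 2) * M := by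
    rw [sum_mul]
    refine sum_le_sum fun i _ => ?_
    rw [← sq, inner_self_eq_norm_sq_to_K, norm_pow, norm_ofReal, abs_norm]
    exact mul_le_mul_of_nonneg_left (hM i) (sq_nonneg _)
  calc ‖∑ i, c i • y i‖ ^ 2 ≤ ∑ i, ∑ j, ‖c i‖ * ‖c j‖ * ‖⟪y i, y j⟫_𝕜‖ :=
        norm_sum_smul_sq_le_sum_sum c y
    _ = ∑ i, ‖c i‖ * ‖c i‖ * ‖⟪y i, y i⟫_𝕜‖ +
          ∑ i, ∑ j ∈ univ.erase i, ‖c i‖ * ‖c j‖ * ‖⟪y i, y j⟫_𝕜‖ := by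
        rw [← sum_add_distrib]
        exact sum_congr rfl fun i _ => (add_sum_erase _ _ (mem_univ i)).symm
    _ ≤ _ := by
        rw [mul_add]
        exact add_le_add h_diag (sum_sum_erase_mul_le_mul_sqrt _ _)

theorem sum_norm_inner_sq_le_of_norm_sum_smul_sq_le {K : ℝ} (hK : 0 ≤ K) (y : ι → H)
    (hy : ∀ c : ι → 𝕜, ‖∑ i, c i • y i‖ ^ 2 ≤ (∑ i, ‖c i‖ ^ 2) * K) (x : H) :
    ∑ i, ‖⟪x, y i⟫_𝕜‖ ^ 2 ≤ ‖x‖ ^ 2 * K := by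
  set S := ∑ i, ‖⟪x, y i⟫_𝕜‖ ^ 2
  set z := ∑ i, conj ⟪x, y i⟫_𝕜 • y i
  have h_inner : ⟪x, z⟫_𝕜 = S := by
    simp only [z, S, inner_sum, inner_smul_right, RCLike.conj_mul, ofReal_sum, ofReal_pow]
  have hS0 : 0 ≤ S := sum_nonneg fun i _ => sq_nonneg _
  rcases hS0.eq_or_lt with hS | hS
  · rw [← hS]; positivity
  refine le_of_mul_le_mul_right ?_ hS
  calc S * S = ‖⟪x, z⟫_𝕜‖ ^ 2 := by rw [h_inner, norm_ofReal, abs_of_pos hS, sq]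
    _ ≤ ‖x‖ ^ 2 * ‖z‖ ^ 2 := by rw [← mul_pow]; gcongr; exact norm_inner_le_norm x z
    _ ≤ ‖x‖ ^ 2 * (S * K) := by
        gcongr
        simpa only [z, S, norm_conj] using hy fun i => conj ⟪x, y i⟫_𝕜
    _ = ‖x‖ ^ 2 * K * S := by ring

end

/-- Boas–Bellman inequality. -/
theorem boas_bellman_inequality {𝕜 H : Type*} [RCLike 𝕜] [NormedAddCommGroup H]
    [InnerProductSpace 𝕜 H] {n : ℕ} (hn : 0 < n) (x : H) (y : Fin n → H) :
    ∑ i, ‖(inner 𝕜 x (y i) : 𝕜)‖ ^ 2 ≤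
      ‖x‖ ^ 2 *
        ((Finset.univ.sup' (Finset.univ_nonempty_iff.mpr (Fin.pos_iff_nonempty.mp hn))
            fun i => ‖y i‖ ^ 2) +
          Real.sqrt (∑ i, ∑ j ∈ Finset.univ.erase i, ‖(inner 𝕜 (y i) (y j) : 𝕜)‖ ^ 2)) := by
  have hM : ∀ i, ‖y i‖ ^ 2 ≤ univ.sup' _ fun i => ‖y i‖ ^ 2 := fun i =>
    le_sup' (fun i => ‖y i‖ ^ 2) (mem_univ i)
  refine sum_norm_inner_sq_le_of_norm_sum_smul_sq_le ?_ y (norm_sum_smul_sq_le y hM) x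
  exact add_nonneg ((sq_nonneg _).trans (hM ⟨0, hn⟩)) (Real.sqrt_nonneg _)
end

section
/- Heilbronn's inequality: For any vectors x, y_1, ..., y_n in an inner product space (H, ⟨·,·⟩) over the real or complex field, one has ∑_{i=1}^n |⟨x, y_i⟩| ≤ ‖x‖ · ( ∑_{i,j=1}^n |⟨y_i, y_j⟩| )^{1/2}. -/
/-!
Choose unimodular scalars `c i` with `c i * ⟪x, y i⟫ = |⟪x, y i⟫|` and put `z = ∑ i, c i • y i`.
Then `∑ i, |⟪x, y i⟫| = ⟪x, z⟫ ≤ ‖x‖ ‖z‖` by Cauchy–Schwarz, and expanding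
`‖z‖² = ∑ i, ∑ j, conj (c i) c j ⟪y i, y j⟫` bounds it by `∑ i, ∑ j, |⟪y i, y j⟫|`.
-/

section

open Finset RCLike

variable {𝕜 H ι : Type*} [RCLike 𝕜] [NormedAddCommGroup H] [InnerProductSpace 𝕜 H] [Fintype ι]

local notation "⟪" a ", " b "⟫" => (inner 𝕜 a b : 𝕜)

theorem norm_sum_smul_sq_le_sum_sum_norm_inner (c : ι → 𝕜) (hc : ∀ i, ‖c i‖ ≤ 1)
    (y : ι → H) : ‖∑ i, c i • y i‖ ^ 2 ≤ ∑ i, ∑ j, ‖⟪y i, y j⟫‖ := by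
  have hterm : ∀ i j, ‖⟪c i • y i, c j • y j⟫‖ ≤ ‖⟪y i, y j⟫‖ := fun i j => by
    rw [inner_smul_left, inner_smul_right, norm_mul, norm_mul, norm_conj]
    calc ‖c i‖ * (‖c j‖ * ‖⟪y i, y j⟫‖) ≤ 1 * (1 * ‖⟪y i, y j⟫‖) := by
          gcongr
          exacts [hc i, hc j]
      _ = ‖⟪y i, y j⟫‖ := by ring
  calc ‖∑ i, c i • y i‖ ^ 2 = ‖⟪∑ i, c i • y i, ∑ j, c j • y j⟫‖ := by
        rw [inner_self_eq_norm_sq_to_K, ← ofReal_pow, norm_ofReal, abs_of_nonneg (by positivity)]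
    _ = ‖∑ i, ∑ j, ⟪c i • y i, c j • y j⟫‖ := by rw [sum_inner]; simp only [inner_sum]
    _ ≤ ∑ i, ∑ j, ‖⟪y i, y j⟫‖ :=
        (norm_sum_le _ _).trans <| sum_le_sum fun i _ =>
          (norm_sum_le _ _).trans <| sum_le_sum fun j _ => hterm i j

theorem exists_unimodular_sum_norm_inner_eq_inner (x : H) (y : ι → H) :
    ∃ c : ι → 𝕜, (∀ i, ‖c i‖ = 1) ∧
      ((∑ i, ‖⟪x, y i⟫‖ : ℝ) : 𝕜) = ⟪x, ∑ i, c i • y i⟫ := by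
  choose c hc_norm hc using fun i => exists_norm_eq_mul_self (K := 𝕜) ⟪x, y i⟫
  refine ⟨c, hc_norm, ?_⟩
  simp only [inner_sum, inner_smul_right, ofReal_sum, hc]

end

theorem heilbronn_inequality_general {𝕜 H : Type*} [RCLike 𝕜] [NormedAddCommGroup H]
    [InnerProductSpace 𝕜 H] {n : ℕ} (x : H) (y : Fin n → H) :
    ∑ i, ‖(inner 𝕜 x (y i) : 𝕜)‖ ≤
      ‖x‖ * Real.sqrt (∑ i, ∑ j, ‖(inner 𝕜 (y i) (y j) : 𝕜)‖) := by
  obtain ⟨c, hc_norm, hc⟩ := exists_unimodular_sum_norm_inner_eq_inner (𝕜 := 𝕜) x y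
  have hz : ‖∑ i, c i • y i‖ ≤ Real.sqrt (∑ i, ∑ j, ‖(inner 𝕜 (y i) (y j) : 𝕜)‖) :=
    Real.le_sqrt_of_sq_le <|
      norm_sum_smul_sq_le_sum_sum_norm_inner c (fun i => (hc_norm i).le) y
  calc ∑ i, ‖(inner 𝕜 x (y i) : 𝕜)‖ = ‖(inner 𝕜 x (∑ i, c i • y i) : 𝕜)‖ := by
        rw [← hc, RCLike.norm_ofReal, abs_of_nonneg (by positivity)]
    _ ≤ ‖x‖ * ‖∑ i, c i • y i‖ := norm_inner_le_norm _ _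
    _ ≤ ‖x‖ * Real.sqrt (∑ i, ∑ j, ‖(inner 𝕜 (y i) (y j) : 𝕜)‖) := by gcongr

/-- Heilbronn's inequality. -/
theorem heilbronn_inequality {𝕜 H : Type*} [RCLike 𝕜] [NormedAddCommGroup H]
    [InnerProductSpace 𝕜 H] {n : ℕ} (hn : 0 < n) (x : H) (y : Fin n → H) :
    ∑ i, ‖(inner 𝕜 x (y i) : 𝕜)‖ ≤
      ‖x‖ * Real.sqrt (∑ i, ∑ j, ‖(inner 𝕜 (y i) (y j) : 𝕜)‖) :=
  heilbronn_inequality_general x y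
end

section
/- Dragomir's third Pečarić-type bound: Let x, y_1, ..., y_n be vectors in an inner product space (H, ⟨·,·⟩) over the real or complex field 𝕂 and let c_1, ..., c_n ∈ 𝕂. Then | ∑_{k=1}^n c_k ⟨x, y_k⟩ |² ≤ ‖x‖² · ( ∑_{k=1}^n |c_k| )² · max_{1≤i,j≤n} |⟨y_i, y_j⟩|. -/
/-! The bound is Cauchy–Schwarz `|⟪x, s⟫|² ≤ ‖x‖² ‖s‖²` for `s = ∑ c_k y_k`, followed by
`‖s‖² = |⟪s, s⟫| ≤ (∑ |c_k|)² · max |⟪y_i, y_j⟫|`, obtained by expanding `s` in both slots. -/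

open Finset

section

variable {𝕜 E ι : Type*} [RCLike 𝕜] [NormedAddCommGroup E] [InnerProductSpace 𝕜 E]

local notation "⟪" x ", " y "⟫" => inner 𝕜 x y

theorem sum_mul_inner_eq_inner_sum_smul (s : Finset ι) (c : ι → 𝕜) (x : E) (y : ι → E) :
    ∑ k ∈ s, c k * ⟪x, y k⟫ = ⟪x, ∑ k ∈ s, c k • y k⟫ := by
  simp only [inner_sum, inner_smul_right]

theorem norm_inner_sum_smul_le_of_forall_le (z : E) (s : Finset ι) (c : ι → 𝕜) (y : ι → E)
    {B : ℝ} (hB : ∀ j ∈ s, ‖⟪z, y j⟫‖ ≤ B) :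
    ‖⟪z, ∑ j ∈ s, c j • y j⟫‖ ≤ (∑ j ∈ s, ‖c j‖) * B := by
  rw [inner_sum, sum_mul]
  refine (norm_sum_le _ _).trans (sum_le_sum fun j hj => ?_)
  rw [inner_smul_right, norm_mul]
  exact mul_le_mul_of_nonneg_left (hB j hj) (norm_nonneg _)

theorem norm_sum_smul_sq_le_of_forall_norm_inner_le (s : Finset ι) (c : ι → 𝕜) (y : ι → E)
    {M : ℝ} (hM : ∀ i ∈ s, ∀ j ∈ s, ‖⟪y i, y j⟫‖ ≤ M) :
    ‖∑ i ∈ s, c i • y i‖ ^ 2 ≤ (∑ i ∈ s, ‖c i‖) ^ 2 * M := by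
  set S := ∑ i ∈ s, c i • y i
  have hS : ∀ i ∈ s, ‖⟪S, y i⟫‖ ≤ (∑ j ∈ s, ‖c j‖) * M := fun i hi => by
    rw [norm_inner_symm]
    exact norm_inner_sum_smul_le_of_forall_le _ s c y (hM i hi)
  calc ‖S‖ ^ 2 = ‖⟪S, S⟫‖ := (norm_sq_eq_re_inner S).trans (inner_self_re_eq_norm S)
    _ ≤ (∑ j ∈ s, ‖c j‖) * ((∑ j ∈ s, ‖c j‖) * M) := norm_inner_sum_smul_le_of_forall_le S s c y hS
    _ = (∑ i ∈ s, ‖c i‖) ^ 2 * M := by ring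

end

/-- Dragomir's third Pečarić-type bound. -/
theorem dragomir_pecaric_type_third {𝕜 H : Type*} [RCLike 𝕜] [NormedAddCommGroup H]
    [InnerProductSpace 𝕜 H] {n : ℕ} (hn : 0 < n) (x : H) (y : Fin n → H) (c : Fin n → 𝕜) :
    ‖∑ k, c k * (inner 𝕜 x (y k) : 𝕜)‖ ^ 2 ≤
      ‖x‖ ^ 2 * (∑ k, ‖c k‖) ^ 2 *
        Finset.univ.sup'
          (Finset.univ_nonempty_iff.mpr
            (by have := Fin.pos_iff_nonempty.mp hn; exact instNonemptyProd))
          (fun ij : Fin n × Fin n => ‖(inner 𝕜 (y ij.1) (y ij.2) : 𝕜)‖) := by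
  set M := Finset.univ.sup' _ (fun ij : Fin n × Fin n => ‖(inner 𝕜 (y ij.1) (y ij.2) : 𝕜)‖)
  have hM : ∀ i ∈ univ, ∀ j ∈ univ, ‖(inner 𝕜 (y i) (y j) : 𝕜)‖ ≤ M := fun i _ j _ =>
    le_sup' (fun ij : Fin n × Fin n => ‖(inner 𝕜 (y ij.1) (y ij.2) : 𝕜)‖) (mem_univ (i, j))
  calc ‖∑ k, c k * (inner 𝕜 x (y k) : 𝕜)‖ ^ 2 = ‖(inner 𝕜 x (∑ k, c k • y k) : 𝕜)‖ ^ 2 := by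
        rw [sum_mul_inner_eq_inner_sum_smul]
    _ ≤ ‖x‖ ^ 2 * ‖∑ k, c k • y k‖ ^ 2 := by
        rw [← mul_pow]
        exact pow_le_pow_left₀ (norm_nonneg _) (norm_inner_le_norm _ _) 2
    _ ≤ ‖x‖ ^ 2 * ((∑ k, ‖c k‖) ^ 2 * M) := by
        gcongr
        exact norm_sum_smul_sq_le_of_forall_norm_inner_le univ c y hM
    _ = ‖x‖ ^ 2 * (∑ k, ‖c k‖) ^ 2 * M := (mul_assoc _ _ _).symm
end

section
/- If x, y_1, ..., y_n are vectors in an inner product space (H, ⟨·,·⟩) over the real or complex field with not all ⟨x, y_k⟩ = 0, then ( ∑_{k=1}^n |⟨x, y_k⟩|² )² / [ ( max_{1≤k≤n} |⟨x, y_k⟩| ) · ∑_{k=1}^n |⟨x, y_k⟩| ] ≤ ‖x‖² · max_{1≤i≤n} { ∑_{j=1}^n |⟨y_i, y_j⟩| }. -/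
/-! Put `u = ∑ₖ ⟪y k, x⟫ • y k`, so that `⟪x, u⟫ = ∑ₖ |⟪x, y k⟫|²`. Cauchy–Schwarz gives
`(∑ₖ |⟪x, y k⟫|²)² ≤ ‖x‖² ‖u‖²`, and expanding `‖u‖²` as a double sum over the Gram entries
bounds it by `max |⟪x, y k⟫| · ∑ₖ |⟪x, y k⟫| · maxᵢ ∑ⱼ |⟪y i, y j⟫|`. -/

open Finset

section

variable {ι : Type*} [Fintype ι]

theorem sum_sum_mul_mul_le_mul_sum_mul {a : ι → ℝ} {g : ι → ι → ℝ} {M B : ℝ}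
    (ha : ∀ i, 0 ≤ a i) (hg : ∀ i j, 0 ≤ g i j) (haM : ∀ j, a j ≤ M)
    (hgB : ∀ i, ∑ j, g i j ≤ B) :
    ∑ i, ∑ j, a i * a j * g i j ≤ M * (∑ i, a i) * B := by
  rw [mul_comm M, sum_mul, sum_mul]
  refine sum_le_sum fun i _ => ?_
  calc ∑ j, a i * a j * g i j ≤ ∑ j, a i * M * g i j := sum_le_sum fun j _ =>
        mul_le_mul_of_nonneg_right (mul_le_mul_of_nonneg_left (haM j) (ha i)) (hg i j)
    _ = a i * M * ∑ j, g i j := by rw [mul_sum]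
    _ ≤ a i * M * B :=
        mul_le_mul_of_nonneg_left (hgB i) (mul_nonneg (ha i) ((ha i).trans (haM i)))

variable {𝕜 H : Type*} [RCLike 𝕜] [NormedAddCommGroup H] [InnerProductSpace 𝕜 H]

theorem norm_sum_smul_sq_le_s10 (c : ι → 𝕜) (v : ι → H) :
    ‖∑ i, c i • v i‖ ^ 2 ≤ ∑ i, ∑ j, ‖c i‖ * ‖c j‖ * ‖(inner 𝕜 (v i) (v j) : 𝕜)‖ := by
  have hexpand : (inner 𝕜 (∑ i, c i • v i) (∑ j, c j • v j) : 𝕜)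
      = ∑ i, ∑ j, starRingEnd 𝕜 (c i) * c j * inner 𝕜 (v i) (v j) := by
    rw [sum_inner]
    refine sum_congr rfl fun i _ => ?_
    rw [inner_sum]
    refine sum_congr rfl fun j _ => ?_
    rw [inner_smul_left, inner_smul_right, mul_assoc]
  calc ‖∑ i, c i • v i‖ ^ 2 = RCLike.re (inner 𝕜 (∑ i, c i • v i) (∑ j, c j • v j) : 𝕜) :=
        norm_sq_eq_re_inner _
    _ ≤ ‖(inner 𝕜 (∑ i, c i • v i) (∑ j, c j • v j) : 𝕜)‖ := RCLike.re_le_norm _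
    _ ≤ ∑ i, ∑ j, ‖c i‖ * ‖c j‖ * ‖(inner 𝕜 (v i) (v j) : 𝕜)‖ := by
        rw [hexpand]
        refine (norm_sum_le _ _).trans (sum_le_sum fun i _ => ?_)
        refine (norm_sum_le _ _).trans (le_of_eq (sum_congr rfl fun j _ => ?_))
        rw [norm_mul, norm_mul, RCLike.norm_conj]

theorem sq_sum_norm_inner_sq_le (x : H) (y : ι → H) :
    (∑ k, ‖(inner 𝕜 x (y k) : 𝕜)‖ ^ 2) ^ 2
      ≤ ‖x‖ ^ 2 * ‖∑ k, (inner 𝕜 (y k) x : 𝕜) • y k‖ ^ 2 := by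
  set u := ∑ k, (inner 𝕜 (y k) x : 𝕜) • y k
  have hxu : (inner 𝕜 x u : 𝕜) = ((∑ k, ‖(inner 𝕜 x (y k) : 𝕜)‖ ^ 2 : ℝ) : 𝕜) := by
    rw [inner_sum]
    push_cast
    refine sum_congr rfl fun k _ => ?_
    rw [inner_smul_right, ← inner_conj_symm (y k) x, RCLike.conj_mul]
  have hcs := norm_inner_le_norm (𝕜 := 𝕜) x u
  rw [hxu, RCLike.norm_ofReal, abs_of_nonneg (by positivity)] at hcs
  rw [← mul_pow]
  exact pow_le_pow_left₀ (by positivity) hcs 2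

end

theorem dragomir_bessel_max_bound_general {𝕜 H : Type*} [RCLike 𝕜] [NormedAddCommGroup H]
    [InnerProductSpace 𝕜 H] {n : ℕ} (hn : 0 < n) (x : H) (y : Fin n → H) :
    (∑ k, ‖(inner 𝕜 x (y k) : 𝕜)‖ ^ 2) ^ 2 /
        ((Finset.univ.sup' (Finset.univ_nonempty_iff.mpr (Fin.pos_iff_nonempty.mp hn))
            fun k => ‖(inner 𝕜 x (y k) : 𝕜)‖) *
          ∑ k, ‖(inner 𝕜 x (y k) : 𝕜)‖) ≤
      ‖x‖ ^ 2 *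
        Finset.univ.sup' (Finset.univ_nonempty_iff.mpr (Fin.pos_iff_nonempty.mp hn))
          (fun i => ∑ j, ‖(inner 𝕜 (y i) (y j) : 𝕜)‖) := by
  have hne := Finset.univ_nonempty_iff.mpr (Fin.pos_iff_nonempty.mp hn)
  set a : Fin n → ℝ := fun k => ‖(inner 𝕜 x (y k) : 𝕜)‖
  set r : Fin n → ℝ := fun i => ∑ j, ‖(inner 𝕜 (y i) (y j) : 𝕜)‖
  set M := univ.sup' hne a
  set B := univ.sup' hne r
  have hgram : ‖∑ k, (inner 𝕜 (y k) x : 𝕜) • y k‖ ^ 2 ≤ M * (∑ k, a k) * B := by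
    refine (norm_sum_smul_sq_le_s10 _ y).trans ?_
    simp only [norm_inner_symm (y _) x]
    exact sum_sum_mul_mul_le_mul_sum_mul (fun _ => norm_nonneg _) (fun _ _ => norm_nonneg _)
      (fun j => le_sup' a (mem_univ j)) (fun i => le_sup' r (mem_univ i))
  have hM : 0 ≤ M := (norm_nonneg _).trans (le_sup' a (mem_univ ⟨0, hn⟩))
  have hB : 0 ≤ B := (sum_nonneg fun _ _ => norm_nonneg _).trans (le_sup' r (mem_univ ⟨0, hn⟩))
  -- a vanishing denominator is covered too: then the quotient is the junk value `0`
  refine div_le_of_le_mul₀ (by positivity) (by positivity) ?_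
  calc (∑ k, a k ^ 2) ^ 2 ≤ ‖x‖ ^ 2 * ‖∑ k, (inner 𝕜 (y k) x : 𝕜) • y k‖ ^ 2 :=
        sq_sum_norm_inner_sq_le x y
    _ ≤ ‖x‖ ^ 2 * (M * (∑ k, a k) * B) := by gcongr
    _ = ‖x‖ ^ 2 * B * (M * ∑ k, a k) := by ring

theorem dragomir_bessel_max_bound {𝕜 H : Type*} [RCLike 𝕜] [NormedAddCommGroup H]
    [InnerProductSpace 𝕜 H] {n : ℕ} (hn : 0 < n) (x : H) (y : Fin n → H)
    (hx : ∃ k, (inner 𝕜 x (y k) : 𝕜) ≠ 0) :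
    (∑ k, ‖(inner 𝕜 x (y k) : 𝕜)‖ ^ 2) ^ 2 /
        ((Finset.univ.sup' (Finset.univ_nonempty_iff.mpr (Fin.pos_iff_nonempty.mp hn))
            fun k => ‖(inner 𝕜 x (y k) : 𝕜)‖) *
          ∑ k, ‖(inner 𝕜 x (y k) : 𝕜)‖) ≤
      ‖x‖ ^ 2 *
        Finset.univ.sup' (Finset.univ_nonempty_iff.mpr (Fin.pos_iff_nonempty.mp hn))
          (fun i => ∑ j, ‖(inner 𝕜 (y i) (y j) : 𝕜)‖) :=
  dragomir_bessel_max_bound_general hn x y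
end

section
/- Main Bessel-type estimate (Theorem 2.1, inequality): Let (H, ⟨·,·⟩) be an inner product space over the real or complex field 𝕂, let γ, Γ ∈ 𝕂 with Γ ≠ −γ, and let x, y_1, ..., y_n ∈ H be such that |⟨x, y_j⟩ − (γ + Γ)/2| ≤ (1/2)|Γ − γ| for each j ∈ {1, ..., n}. Then ( ∑_{j=1}^n |⟨x, y_j⟩|² )^{1/2} ≤ (1/√n) ‖x‖ ‖∑_{j=1}^n y_j‖ + (√n / 4) · |Γ − γ|² / |Γ + γ|. -/
/-!
Put `m = (γ + Γ)/2` and `r = |Γ - γ|/2`. Each `a_j = ⟨x, y_j⟩` lies in the closed disc of radius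
`r` about `m`, which expands to `|a_j|² ≤ 2 Re(m̄ a_j) - |m|² + r²`. Summing, and bounding
`Re(m̄ ∑ a_j) = Re(m̄ ⟨x, ∑ y_j⟩)` by Cauchy–Schwarz, gives
`S² ≤ 2|m| ‖x‖ ‖∑ y_j‖ - n(|m|² - r²)` for `S² = ∑ |a_j|²`; the AM-GM inequality
`2√n |m| S ≤ S² + n|m|²` then yields the claim.
-/

open RCLike Finset ComplexConjugate

namespace RCLike

variable {𝕜 : Type*} [RCLike 𝕜]

theorem norm_sq_le_of_norm_sub_le {a m : 𝕜} {r : ℝ} (h : ‖a - m‖ ≤ r) :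
    ‖a‖ ^ 2 ≤ 2 * re (conj m * a) - (‖m‖ ^ 2 - r ^ 2) := by
  have hsq : ‖a - m‖ ^ 2 ≤ r ^ 2 := pow_le_pow_left₀ (norm_nonneg _) h 2
  have hre : re (conj a * m) = re (conj m * a) := by
    rw [← conj_re, map_mul, conj_conj, mul_comm]
  rw [@norm_sub_sq 𝕜 𝕜, inner_apply', hre] at hsq
  linarith

theorem sum_norm_sq_le_of_norm_sub_le {ι : Type*} (s : Finset ι) {a : ι → 𝕜} {m : 𝕜} {r : ℝ}
    (h : ∀ i ∈ s, ‖a i - m‖ ≤ r) :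
    ∑ i ∈ s, ‖a i‖ ^ 2 ≤ 2 * re (conj m * ∑ i ∈ s, a i) - #s * (‖m‖ ^ 2 - r ^ 2) :=
  calc ∑ i ∈ s, ‖a i‖ ^ 2
      ≤ ∑ i ∈ s, (2 * re (conj m * a i) - (‖m‖ ^ 2 - r ^ 2)) :=
        sum_le_sum fun i hi => norm_sq_le_of_norm_sub_le (h i hi)
    _ = 2 * re (conj m * ∑ i ∈ s, a i) - #s * (‖m‖ ^ 2 - r ^ 2) := by
        rw [sum_sub_distrib, ← mul_sum, ← map_sum, ← mul_sum, sum_const, nsmul_eq_mul]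

end RCLike

theorem le_div_sqrt_add_of_sq_le {S P M r n : ℝ} (hn : 0 < n) (hM : 0 < M)
    (h : S ^ 2 ≤ 2 * M * P - n * (M ^ 2 - r ^ 2)) :
    S ≤ P / √n + √n * r ^ 2 / (2 * M) := by
  have hs : 0 < √n := Real.sqrt_pos.mpr hn
  have hsq : √n ^ 2 = n := Real.sq_sqrt hn.le
  rw [div_add_div _ _ hs.ne' (by positivity), le_div_iff₀ (by positivity)]
  nlinarith [sq_nonneg (S - √n * M)]

/-- Main Bessel-type estimate (Theorem 2.1, inequality). -/
theorem bessel_type_estimate {𝕜 H : Type*} [RCLike 𝕜] [NormedAddCommGroup H]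
    [InnerProductSpace 𝕜 H] {n : ℕ} (hn : 0 < n) (γ Γ : 𝕜) (hΓγ : Γ ≠ -γ)
    (x : H) (y : Fin n → H)
    (h : ∀ j, ‖(inner 𝕜 x (y j) : 𝕜) - (γ + Γ) / 2‖ ≤ (1 / 2) * ‖Γ - γ‖) :
    Real.sqrt (∑ j, ‖(inner 𝕜 x (y j) : 𝕜)‖ ^ 2) ≤
      (1 / Real.sqrt n) * ‖x‖ * ‖∑ j, y j‖ +
        (Real.sqrt n / 4) * (‖Γ - γ‖ ^ 2 / ‖Γ + γ‖) := by
  set m : 𝕜 := (γ + Γ) / 2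
  have hm : 0 < ‖m‖ := norm_pos_iff.mpr <| div_ne_zero
    (fun h0 => hΓγ (eq_neg_of_add_eq_zero_left (by rwa [add_comm]))) two_ne_zero
  have hsum := sum_norm_sq_le_of_norm_sub_le univ fun j _ => h j
  rw [← inner_sum, card_univ, Fintype.card_fin] at hsum
  have hre : re (conj m * inner 𝕜 x (∑ j, y j)) ≤ ‖m‖ * (‖x‖ * ‖∑ j, y j‖) :=
    calc re (conj m * inner 𝕜 x (∑ j, y j)) ≤ ‖conj m * inner 𝕜 x (∑ j, y j)‖ := re_le_norm _
      _ ≤ ‖m‖ * (‖x‖ * ‖∑ j, y j‖) := by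
        rw [norm_mul, norm_conj]; gcongr; exact norm_inner_le_norm _ _
  have hS := le_div_sqrt_add_of_sq_le (S := √(∑ j, ‖(inner 𝕜 x (y j) : 𝕜)‖ ^ 2))
    (P := ‖x‖ * ‖∑ j, y j‖) (r := 1 / 2 * ‖Γ - γ‖) (Nat.cast_pos.mpr hn) hm
    (by rw [Real.sq_sqrt (by positivity)]; linarith)
  have hnorm : ‖Γ + γ‖ = 2 * ‖m‖ := by
    rw [norm_div, RCLike.norm_two, add_comm]; field_simp
  rw [hnorm]
  convert hS using 2 <;> ring
end

section
/- Second Bessel-type estimate (Theorem 2.2, inequality): Let (H, ⟨·,·⟩) be an inner product space over the real or complex field 𝕂, let γ, Γ ∈ 𝕂 with Re(Γ γ̄) > 0, and let x, y_1, ..., y_n ∈ H be such that |⟨x, y_j⟩ − (γ + Γ)/2| ≤ (1/2)|Γ − γ| for each j ∈ {1, ..., n}. Then ∑_{j=1}^n |⟨x, y_j⟩|² ≤ (1/n) · ( |Γ + γ|² / (4 Re(Γ γ̄)) ) · ‖∑_{j=1}^n y_j‖² · ‖x‖². -/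
/-!
The hypothesis on `a = ⟪x, y j⟫` says that `a` lies in the closed disc with diameter `[γ, Γ]`,
which is equivalent to `|a|² + Re(Γ γ̄) ≤ Re(conj(Γ + γ) a)`. Summing over `j` and applying
Cauchy–Schwarz to `∑ a_j = ⟪x, ∑ y_j⟫` gives `A + n Re(Γ γ̄) ≤ |Γ + γ| ‖x‖ ‖∑ y_j‖` with
`A = ∑ |a_j|²`, and `4 n Re(Γ γ̄) A ≤ (A + n Re(Γ γ̄))²` (AM–GM) yields the estimate.
-/

open RCLike ComplexConjugate

section Scalar

variable {𝕜 : Type*} [RCLike 𝕜]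

theorem norm_sub_midpoint_sq_sub_sq (a γ Γ : 𝕜) :
    ‖a - (γ + Γ) / 2‖ ^ 2 - ((1 / 2) * ‖Γ - γ‖) ^ 2 =
      ‖a‖ ^ 2 + re (Γ * conj γ) - re (conj (Γ + γ) * a) := by
  simp only [norm_sq_eq_def, map_sub, map_add, mul_re, conj_re, conj_im, div_re,
    div_im, ofNat_re, ofNat_im, mul_pow, normSq_apply]
  ring_nf

theorem norm_sq_add_re_mul_conj_le_of_norm_sub_midpoint_le {a γ Γ : 𝕜}
    (h : ‖a - (γ + Γ) / 2‖ ≤ (1 / 2) * ‖Γ - γ‖) :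
    ‖a‖ ^ 2 + re (Γ * conj γ) ≤ re (conj (Γ + γ) * a) := by
  have := norm_sub_midpoint_sq_sub_sq a γ Γ
  nlinarith [pow_le_pow_left₀ (norm_nonneg _) h 2]

end Scalar

theorem le_sq_div_four_mul_of_add_le {A B C : ℝ} (hA : 0 ≤ A) (hB : 0 < B) (h : A + B ≤ C) :
    A ≤ C ^ 2 / (4 * B) := by
  rw [le_div_iff₀ (by positivity)]
  nlinarith [sq_nonneg (A - B)]

section InnerProduct

variable {𝕜 H ι : Type*} [RCLike 𝕜] [NormedAddCommGroup H] [InnerProductSpace 𝕜 H] [Fintype ι]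

theorem sum_norm_inner_sq_add_card_mul_le {γ Γ : 𝕜} {x : H} {y : ι → H}
    (h : ∀ j, ‖(inner 𝕜 x (y j) : 𝕜) - (γ + Γ) / 2‖ ≤ (1 / 2) * ‖Γ - γ‖) :
    ∑ j, ‖(inner 𝕜 x (y j) : 𝕜)‖ ^ 2 + Fintype.card ι * re (Γ * conj γ) ≤
      ‖Γ + γ‖ * (‖x‖ * ‖∑ j, y j‖) :=
  calc ∑ j, ‖(inner 𝕜 x (y j) : 𝕜)‖ ^ 2 + Fintype.card ι * re (Γ * conj γ)
      = ∑ j, (‖(inner 𝕜 x (y j) : 𝕜)‖ ^ 2 + re (Γ * conj γ)) := by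
        rw [Finset.sum_add_distrib, Finset.sum_const, Finset.card_univ, nsmul_eq_mul]
    _ ≤ ∑ j, re (conj (Γ + γ) * inner 𝕜 x (y j)) :=
        Finset.sum_le_sum fun j _ => norm_sq_add_re_mul_conj_le_of_norm_sub_midpoint_le (h j)
    _ = re (conj (Γ + γ) * inner 𝕜 x (∑ j, y j)) := by rw [inner_sum, Finset.mul_sum, map_sum]
    _ ≤ ‖conj (Γ + γ) * inner 𝕜 x (∑ j, y j)‖ := re_le_norm _
    _ ≤ ‖Γ + γ‖ * (‖x‖ * ‖∑ j, y j‖) := by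
        rw [norm_mul, norm_conj]
        gcongr
        exact norm_inner_le_norm _ _

end InnerProduct

/-- Second Bessel-type estimate (Theorem 2.2, inequality). -/
theorem bessel_type_estimate_second {𝕜 H : Type*} [RCLike 𝕜] [NormedAddCommGroup H]
    [InnerProductSpace 𝕜 H] {n : ℕ} (hn : 0 < n) (γ Γ : 𝕜)
    (hΓγ : 0 < RCLike.re (Γ * starRingEnd 𝕜 γ)) (x : H) (y : Fin n → H)
    (h : ∀ j, ‖(inner 𝕜 x (y j) : 𝕜) - (γ + Γ) / 2‖ ≤ (1 / 2) * ‖Γ - γ‖) :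
    ∑ j, ‖(inner 𝕜 x (y j) : 𝕜)‖ ^ 2 ≤
      (1 / n) * (‖Γ + γ‖ ^ 2 / (4 * RCLike.re (Γ * starRingEnd 𝕜 γ))) *
        ‖∑ j, y j‖ ^ 2 * ‖x‖ ^ 2 := by
  have hsum := sum_norm_inner_sq_add_card_mul_le h
  rw [Fintype.card_fin] at hsum
  calc ∑ j, ‖(inner 𝕜 x (y j) : 𝕜)‖ ^ 2
      ≤ (‖Γ + γ‖ * (‖x‖ * ‖∑ j, y j‖)) ^ 2 / (4 * (n * re (Γ * conj γ))) :=
        le_sq_div_four_mul_of_add_le (by positivity) (mul_pos (Nat.cast_pos.mpr hn) hΓγ) hsum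
    _ = _ := by field_simp
end

section
/- Reverse triangle-type inequalities for complex numbers: Let z_1, ..., z_n, γ, Γ ∈ ℂ satisfy |z_j − (γ + Γ)/2| ≤ (1/2)|Γ − γ| for each j ∈ {1, ..., n}. (a) If Γ ≠ −γ, then ( ∑_{j=1}^n |z_j|² )^{1/2} ≤ (1/√n) |∑_{j=1}^n z_j| + (√n / 4) · |Γ − γ|² / |Γ + γ|. (b) If Re(Γ γ̄) > 0, then ∑_{j=1}^n |z_j|² ≤ (1/n) · ( |Γ + γ|² / (4 Re(Γ γ̄)) ) · |∑_{j=1}^n z_j|². -/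
/-!
Membership of `z` in the closed disc with diameter `[γ, Γ]` is equivalent to
`‖z‖² + Re(Γ γ̄) ≤ Re((γ + Γ)‾ z)`. Summing over `j` and bounding the right side by
`‖Γ + γ‖ ‖∑ zⱼ‖` gives `∑ ‖zⱼ‖² + n Re(Γ γ̄) ≤ ‖Γ + γ‖ ‖∑ zⱼ‖`. Part (b) follows from
`4 n Re(Γ γ̄) ∑ ‖zⱼ‖² ≤ (∑ ‖zⱼ‖² + n Re(Γ γ̄))²`, part (a) from AM-GM applied to
`√n ‖Γ + γ‖ √(∑ ‖zⱼ‖²)` together with `4 Re(Γ γ̄) = ‖Γ + γ‖² - ‖Γ - γ‖²`.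
-/

open ComplexConjugate Finset

namespace Complex

theorem four_mul_re_mul_conj (γ Γ : ℂ) :
    4 * (Γ * conj γ).re = ‖Γ + γ‖ ^ 2 - ‖Γ - γ‖ ^ 2 := by
  rw [Complex.sq_norm, Complex.sq_norm, normSq_add, normSq_sub]
  ring

theorem norm_sub_midpoint_sq_sub_sq (z γ Γ : ℂ) :
    ‖z - (γ + Γ) / 2‖ ^ 2 - (‖Γ - γ‖ / 2) ^ 2 =
      ‖z‖ ^ 2 + (Γ * conj γ).re - (conj (γ + Γ) * z).re := by
  simp only [div_pow, Complex.sq_norm, normSq_apply, sub_re, sub_im, add_re, add_im, div_re, div_im,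
    mul_re, conj_re, conj_im, re_ofNat, im_ofNat]
  ring

theorem norm_sq_add_re_le_of_norm_sub_midpoint_le {z γ Γ : ℂ}
    (h : ‖z - (γ + Γ) / 2‖ ≤ ‖Γ - γ‖ / 2) :
    ‖z‖ ^ 2 + (Γ * conj γ).re ≤ (conj (γ + Γ) * z).re := by
  have := pow_le_pow_left₀ (norm_nonneg _) h 2
  linarith [norm_sub_midpoint_sq_sub_sq z γ Γ]

theorem sum_norm_sq_add_card_mul_le {ι : Type*} (s : Finset ι) (z : ι → ℂ) {γ Γ : ℂ}
    (h : ∀ j ∈ s, ‖z j - (γ + Γ) / 2‖ ≤ ‖Γ - γ‖ / 2) :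
    ∑ j ∈ s, ‖z j‖ ^ 2 + #s * (Γ * conj γ).re ≤ ‖Γ + γ‖ * ‖∑ j ∈ s, z j‖ :=
  calc ∑ j ∈ s, ‖z j‖ ^ 2 + #s * (Γ * conj γ).re
      = ∑ j ∈ s, (‖z j‖ ^ 2 + (Γ * conj γ).re) := by
        rw [sum_add_distrib, sum_const, nsmul_eq_mul]
    _ ≤ ∑ j ∈ s, (conj (γ + Γ) * z j).re :=
        sum_le_sum fun j hj => norm_sq_add_re_le_of_norm_sub_midpoint_le (h j hj)
    _ = (conj (γ + Γ) * ∑ j ∈ s, z j).re := by rw [mul_sum, re_sum]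
    _ ≤ ‖conj (γ + Γ) * ∑ j ∈ s, z j‖ := re_le_norm _
    _ = ‖Γ + γ‖ * ‖∑ j ∈ s, z j‖ := by rw [norm_mul, norm_conj, add_comm γ]

end Complex

namespace Real

variable {S n r A T : ℝ}

theorem sqrt_le_of_add_mul_le_mul {B : ℝ} (hS : 0 ≤ S) (hn : 0 < n) (hA : 0 < A)
    (hsum : S + n * r ≤ A * T) (hr : 4 * r = A ^ 2 - B ^ 2) :
    √S ≤ 1 / √n * T + √n / 4 * (B ^ 2 / A) := by
  have hS' : √S ^ 2 = S := sq_sqrt hS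
  have hn' : √n ^ 2 = n := sq_sqrt hn.le
  have hpos : 0 < √n * A := by positivity
  have amgm : √n * A * √S ≤ S + n * A ^ 2 / 4 := by
    nlinarith [sq_nonneg (2 * √S - √n * A)]
  calc √S ≤ (A * T + n * B ^ 2 / 4) / (√n * A) := by
        rw [le_div_iff₀ hpos]
        nlinarith
    _ = 1 / √n * T + √n / 4 * (B ^ 2 / A) := by
        field_simp
        rw [hn']
        ring

theorem le_mul_sq_of_add_mul_le_mul (hS : 0 ≤ S) (hn : 0 < n) (hr : 0 < r)
    (hsum : S + n * r ≤ A * T) :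
    S ≤ 1 / n * (A ^ 2 / (4 * r)) * T ^ 2 := by
  have hsq : (S + n * r) ^ 2 ≤ (A * T) ^ 2 := pow_le_pow_left₀ (by positivity) hsum 2
  calc S ≤ (A * T) ^ 2 / (4 * n * r) := by
        rw [le_div_iff₀ (by positivity)]
        nlinarith [sq_nonneg (S - n * r)]
    _ = 1 / n * (A ^ 2 / (4 * r)) * T ^ 2 := by
        field_simp

end Real

theorem reverse_triangle_complex_general {n : ℕ} (z : Fin n → ℂ) (γ Γ : ℂ)
    (h : ∀ j, ‖z j - (γ + Γ) / 2‖ ≤ (1 / 2) * ‖Γ - γ‖) :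
    (Γ ≠ -γ →
        Real.sqrt (∑ j, ‖z j‖ ^ 2) ≤
          (1 / Real.sqrt n) * ‖∑ j, z j‖ +
            (Real.sqrt n / 4) * (‖Γ - γ‖ ^ 2 / ‖Γ + γ‖)) ∧
      (0 < (Γ * starRingEnd ℂ γ).re →
        ∑ j, ‖z j‖ ^ 2 ≤
          (1 / n) * (‖Γ + γ‖ ^ 2 / (4 * (Γ * starRingEnd ℂ γ).re)) * ‖∑ j, z j‖ ^ 2) := by
  obtain rfl | hn := n.eq_zero_or_pos
  · simp
  have hsum := Complex.sum_norm_sq_add_card_mul_le univ z fun j _ =>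
    (h j).trans_eq (one_div_mul_eq_div _ _)
  rw [card_univ, Fintype.card_fin] at hsum
  have hS : 0 ≤ ∑ j, ‖z j‖ ^ 2 := by positivity
  have hn' : (0 : ℝ) < n := Nat.cast_pos.2 hn
  refine ⟨fun hne => ?_, fun hr => Real.le_mul_sq_of_add_mul_le_mul hS hn' hr hsum⟩
  have hA : 0 < ‖Γ + γ‖ := norm_pos_iff.2 (add_eq_zero_iff_eq_neg.not.2 hne)
  exact Real.sqrt_le_of_add_mul_le_mul hS hn' hA hsum (Complex.four_mul_re_mul_conj γ Γ)

/-- Reverse triangle-type inequalities for complex numbers. -/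
theorem reverse_triangle_complex {n : ℕ} (hn : 0 < n) (z : Fin n → ℂ) (γ Γ : ℂ)
    (h : ∀ j, ‖z j - (γ + Γ) / 2‖ ≤ (1 / 2) * ‖Γ - γ‖) :
    (Γ ≠ -γ →
        Real.sqrt (∑ j, ‖z j‖ ^ 2) ≤
          (1 / Real.sqrt n) * ‖∑ j, z j‖ +
            (Real.sqrt n / 4) * (‖Γ - γ‖ ^ 2 / ‖Γ + γ‖)) ∧
      (0 < (Γ * starRingEnd ℂ γ).re →
        ∑ j, ‖z j‖ ^ 2 ≤
          (1 / n) * (‖Γ + γ‖ ^ 2 / (4 * (Γ * starRingEnd ℂ γ).re)) * ‖∑ j, z j‖ ^ 2) :=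
  reverse_triangle_complex_general z γ Γ h
end
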